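/- With the edge lengths d(u) = 2^{−p₀(u)}, the prepending maps S₀(w) = aw and T₀(w) = bw are 1-Lipschitz for the tree metric ρ on Γ₀: for all finite words u,v over {a,b}, ρ(au, av) ≤ ρ(u,v) and ρ(bu, bv) ≤ ρ(u,v). -/

import Mathlib

/-- The prefix of length `n` of the infinite word `z : ℕ → Bool`
(letters `a`/`b` are modeled as the two elements of `Bool`). -/
def prefixWord (z : ℕ → Bool) (n : ℕ) : List Bool := (List.range n).map z

/-- `z` is periodic with period `p ≥ 1`: `z (i + p) = z i` for all `i`. -/
def IsPeriodicWith (z : ℕ → Bool) (p : ℕ) : Prop := 1 ≤ p ∧ ∀ i, z (i + p) = z i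

/-- `z` is a periodic infinite word. -/
def IsPeriodicWord (z : ℕ → Bool) : Prop := ∃ p, IsPeriodicWith z p

/-- The minimal period of `z` (junk value `0` if `z` is not periodic). -/
noncomputable def minPeriod (z : ℕ → Bool) : ℕ := sInf {p | IsPeriodicWith z p}

/-- The finite word `v` occurs in `z` as a contiguous segment starting at position `n`. -/
def OccursAt (v : List Bool) (z : ℕ → Bool) (n : ℕ) : Prop :=
  ∀ i < v.length, z (n + i) = v.getD i false

/-- The finite word `v` occurs somewhere in `z` as a contiguous segment. -/
def Occurs (v : List Bool) (z : ℕ → Bool) : Prop := ∃ n, OccursAt v z n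

/-- The minimal potential period `p₀ v` of a finite word `v`: the minimum, over all
periodic infinite words `z` in which `v` occurs, of the minimal period of `z`;
`p₀` of the empty word is `0`. -/
noncomputable def p0 (v : List Bool) : ℕ :=
  if v = [] then 0
  else sInf {p | ∃ z : ℕ → Bool, IsPeriodicWord z ∧ Occurs v z ∧ minPeriod z = p}

/-- The `d`-length of a finite word: the sum of the lengths `d (w|_i)` of the tree
edges along the path from the empty word to `w` (the edge joining a nonempty word `u`
to the word obtained by deleting its last letter has length `d u`). -/
noncomputable def dLength (d : List Bool → ℝ) (w : List Bool) : ℝ :=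
  ∑ i ∈ Finset.range w.length, d (w.take (i + 1))

/-- The longest common prefix of two finite words. -/
def lcp : List Bool → List Bool → List Bool
  | a :: u, b :: v => if a = b then a :: lcp u v else []
  | _, _ => []

/-- The tree metric on finite words induced by the edge lengths `d`:
`ρ(u,v) = l_d(u) + l_d(v) − 2 l_d(u ∧ v)`. -/
noncomputable def treeDist (d : List Bool → ℝ) (u v : List Bool) : ℝ :=
  dLength d u + dLength d v - 2 * dLength d (lcp u v)

/-- The specific edge lengths `d(u) = 2 ^ (−p₀ u)` used in the counterexample. -/
noncomputable def dEdge (u : List Bool) : ℝ := 2 ^ (-(p0 u : ℤ))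

/-- Prepending a finite word `w` to an infinite word `z`. -/
def prependWord (w : List Bool) (z : ℕ → Bool) : ℕ → Bool :=
  fun i => if i < w.length then w.getD i false else z (i - w.length)


/-!
Prepending a letter `c` maps the tree geodesic from `u ∧ v` to `u` edge by edge onto the geodesic
from `c(u ∧ v)` to `cu`, so `ρ(cu, cv)` is the tree distance of `u` and `v` for the edge lengths
`w ↦ d(cw)`. These are at most `d(w)`: every periodic word in which `cw` occurs also contains `w`,
hence `p₀(w) ≤ p₀(cw)`.
-/

theorem lcp_cons_cons (c : Bool) (u v : List Bool) : lcp (c :: u) (c :: v) = c :: lcp u v := by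
  simp [lcp]

theorem lcp_prefix : ∀ u v : List Bool, lcp u v <+: u ∧ lcp u v <+: v
  | [], _ | _ :: _, [] => by simp [lcp]
  | a :: u, b :: v => by
    by_cases hab : a = b
    · subst hab
      simpa [lcp_cons_cons] using lcp_prefix u v
    · simp [lcp, hab]

section dLength

variable {d₁ d₂ : List Bool → ℝ}

theorem dLength_cons (d : List Bool → ℝ) (c : Bool) (w : List Bool) :
    dLength d (c :: w) = d [c] + dLength (fun x => d (c :: x)) w := by
  simp [dLength, Finset.sum_range_succ', add_comm]

theorem dLength_sub_dLength_of_prefix (d : List Bool → ℝ) {m w : List Bool} (h : m <+: w) :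
    dLength d w - dLength d m = ∑ i ∈ Finset.Ico m.length w.length, d (w.take (i + 1)) := by
  have hm : dLength d m = ∑ i ∈ Finset.range m.length, d (w.take (i + 1)) :=
    Finset.sum_congr rfl fun i hi => by
      have := h.length_le
      rw [(h.take (i + 1)).eq_of_length (by simp at hi ⊢; omega)]
  rw [dLength, hm, ← Finset.sum_range_add_sum_Ico _ h.length_le]
  ring

theorem dLength_sub_dLength_mono (hd : ∀ w, d₁ w ≤ d₂ w) {m w : List Bool} (h : m <+: w) :
    dLength d₁ w - dLength d₁ m ≤ dLength d₂ w - dLength d₂ m := by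
  rw [dLength_sub_dLength_of_prefix d₁ h, dLength_sub_dLength_of_prefix d₂ h]
  exact Finset.sum_le_sum fun i _ => hd _

theorem treeDist_mono (hd : ∀ w, d₁ w ≤ d₂ w) (u v : List Bool) :
    treeDist d₁ u v ≤ treeDist d₂ u v := by
  have hu := dLength_sub_dLength_mono hd (lcp_prefix u v).1
  have hv := dLength_sub_dLength_mono hd (lcp_prefix u v).2
  unfold treeDist
  linarith

end dLength

theorem treeDist_cons_cons (d : List Bool → ℝ) (c : Bool) (u v : List Bool) :
    treeDist d (c :: u) (c :: v) = treeDist (fun w => d (c :: w)) u v := by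
  simp only [treeDist, lcp_cons_cons, dLength_cons]
  ring

theorem exists_isPeriodicWord_occurs {w : List Bool} (hw : w ≠ []) :
    ∃ z, IsPeriodicWord z ∧ Occurs w z := by
  have hlen : 0 < w.length := List.length_pos_iff.mpr hw
  refine ⟨fun i => w.getD (i % w.length) false, ⟨w.length, hlen, fun i => ?_⟩, 0, fun i hi => ?_⟩
  · simp
  · simp [Nat.mod_eq_of_lt hi]

theorem Occurs.of_cons {c : Bool} {w : List Bool} {z : ℕ → Bool} (h : Occurs (c :: w) z) :
    Occurs w z := by
  obtain ⟨n, hn⟩ := h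
  refine ⟨n + 1, fun i hi => ?_⟩
  simpa [Nat.add_assoc, Nat.add_comm 1 i] using hn (i + 1) (by simpa using hi)

theorem p0_le_p0_cons (c : Bool) (w : List Bool) : p0 w ≤ p0 (c :: w) := by
  rcases eq_or_ne w [] with rfl | hw
  · simp [p0]
  rw [p0, if_neg hw, p0, if_neg (List.cons_ne_nil c w)]
  set S := {p | ∃ z : ℕ → Bool, IsPeriodicWord z ∧ Occurs (c :: w) z ∧ minPeriod z = p}
  -- `sInf S` is attained only because `S` is nonempty (`sInf ∅ = 0` in `ℕ`)
  obtain ⟨z₀, hz₀, hocc₀⟩ := exists_isPeriodicWord_occurs (List.cons_ne_nil c w)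
  obtain ⟨z, hz, hocc, hmin⟩ : sInf S ∈ S := Nat.sInf_mem ⟨_, z₀, hz₀, hocc₀, rfl⟩
  exact Nat.sInf_le ⟨z, hz, hocc.of_cons, hmin⟩

theorem dEdge_cons_le (c : Bool) (w : List Bool) : dEdge (c :: w) ≤ dEdge w := by
  unfold dEdge
  gcongr
  · norm_num
  · exact p0_le_p0_cons c w

/-- With the edge lengths `d(u) = 2 ^ (−p₀ u)`, the prepending maps `w ↦ a·w` and
`w ↦ b·w` are 1-Lipschitz for the tree metric: for every letter `c` and all finite
words `u, v`, `ρ(c·u, c·v) ≤ ρ(u, v)`. -/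
theorem prepend_lipschitz_one (c : Bool) (u v : List Bool) :
    treeDist dEdge (c :: u) (c :: v) ≤ treeDist dEdge u v := by
  rw [treeDist_cons_cons]
  exact treeDist_mono (dEdge_cons_le c) u v
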